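/- arXiv:2503.07343 — 4 statements merged into one kernel-verified Lean document; each statement's English description precedes it below -/
import Mathlib

section
/- Fix f > 0 and define for c, d > 0 the function g(c,d) = √c / (d+f)^{1/2} · (d/(d+f))^c. Then for all c, d > 0 one has g(c,d) < (2ef)^{-1/2}. -/
open Real

/-- The maximum of `c ↦ √c * r ^ c` is attained at `c = 1 / (2 * -log r)`. -/
lemma sqrt_mul_rpow_le {r c : ℝ} (hr0 : 0 < r) (hr1 : r < 1) (hc : 0 ≤ c) :
    √c * r ^ c ≤ (√(2 * exp 1 * -log r))⁻¹ := by
  set a := -log r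
  have ha : 0 < a := neg_pos.mpr (log_neg hr0 hr1)
  have hrc : r ^ c = exp (-(a * c)) := by rw [rpow_def_of_pos hr0, neg_mul_eq_neg_mul, neg_neg]
  rw [← sqrt_inv, ← sqrt_sq (rpow_nonneg hr0.le c), ← sqrt_mul hc]
  apply sqrt_le_sqrt
  calc c * (r ^ c) ^ 2 = (2 * a * c) * exp (-(2 * a * c)) / (2 * a) := by
        rw [hrc, ← exp_nat_mul]; field_simp; ring_nf
    _ ≤ exp (-1) / (2 * a) := by gcongr; exact mul_exp_neg_le_exp_neg_one _
    _ = (2 * exp 1 * a)⁻¹ := by rw [exp_neg]; field_simp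

/-- `(1 + 1/t) * log (1 + t) > 1` for `t = f / d`. -/
lemma lt_mul_neg_log_div_add {d f : ℝ} (hd : 0 < d) (hf : 0 < f) :
    f < (d + f) * -log (d / (d + f)) := by
  have hdf : 0 < d + f := by linarith
  have hne : d / (d + f) ≠ 1 := by rw [ne_eq, div_eq_one_iff_eq hdf.ne']; linarith
  have hlog := log_lt_sub_one_of_pos (div_pos hd hdf) hne
  have hsub : (d + f) * (d / (d + f) - 1) = -f := by field_simp; ring
  linarith [mul_lt_mul_of_pos_left hlog hdf]

theorem g_lt_bound (f : ℝ) (hf : 0 < f) (c d : ℝ) (hc : 0 < c) (hd : 0 < d) :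
    Real.sqrt c / Real.sqrt (d + f) * (d / (d + f)) ^ c
      < (Real.sqrt (2 * Real.exp 1 * f))⁻¹ := by
  have hdf : 0 < d + f := by linarith
  have hr0 : 0 < d / (d + f) := div_pos hd hdf
  have hr1 : d / (d + f) < 1 := (div_lt_one hdf).mpr (by linarith)
  calc √c / √(d + f) * (d / (d + f)) ^ c = √c * (d / (d + f)) ^ c / √(d + f) := by ring
    _ ≤ (√(2 * exp 1 * -log (d / (d + f))))⁻¹ / √(d + f) := by
        gcongr; exact sqrt_mul_rpow_le hr0 hr1 hc.le
    _ = (√(2 * exp 1 * ((d + f) * -log (d / (d + f)))))⁻¹ := by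
        rw [div_eq_mul_inv, ← mul_inv, ← sqrt_mul' _ hdf.le]; ring_nf
    _ < (√(2 * exp 1 * f))⁻¹ := by
        gcongr
        exact lt_mul_neg_log_div_add hd hf
end

section
/- Fix f > 0 and define g(c,d) = √c / (d+f)^{1/2} · (d/(d+f))^c and h(d) = (1/2)·(log(1 + f/d))^{-1} for c, d > 0. Then g(h(d), d) → (2ef)^{-1/2} as d → ∞. -/
/-! Since `d / (d + f) = (1 + f / d)⁻¹` and `y ^ (a / log y) = exp a`, the power factor of
`g (h d) d` is identically `exp (-1/2)`, so `g (h d) d = (2 e (d + f) log (1 + f / d)) ^ (-1/2)`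
for `d > 0`, and `(d + f) log (1 + f / d) → f`. -/

open Real Filter Topology

lemma Real.rpow_mul_inv_log {x : ℝ} (hx₀ : 0 < x) (hx₁ : x ≠ 1) (a : ℝ) :
    x ^ (a * (log x)⁻¹) = exp a := by
  rw [mul_comm, rpow_mul hx₀.le, rpow_inv_log hx₀ hx₁, exp_one_rpow]

lemma Real.tendsto_add_mul_log_one_add_div_atTop (t : ℝ) :
    Tendsto (fun x => (x + t) * log (1 + t / x)) atTop (𝓝 t) := by
  have hlog : Tendsto (fun x => log (1 + t / x)) atTop (𝓝 0) := by
    simpa using ((tendsto_const_nhds.div_atTop tendsto_id).const_add 1).log (by norm_num)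
  simpa [add_mul] using (tendsto_mul_log_one_add_div_atTop t).add (hlog.const_mul t)

lemma sqrt_div_sqrt_mul_rpow_half_inv_log {d f : ℝ} (hd : 0 < d) (hf : 0 < f) :
    √((1 / 2) * (log (1 + f / d))⁻¹) / √(d + f) * (d / (d + f)) ^ ((1 / 2) * (log (1 + f / d))⁻¹)
      = (√(2 * exp 1 * ((d + f) * log (1 + f / d))))⁻¹ := by
  have hbase : d / (d + f) = (1 + f / d)⁻¹ := by field_simp
  have hlog : 0 < log (1 + f / d) := log_pos (by simp; positivity)
  rw [hbase, inv_rpow (by positivity),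
    rpow_mul_inv_log (by positivity) (fun h => by simp [h] at hlog), exp_half,
    ← sqrt_div' _ (by positivity), ← sqrt_inv, ← sqrt_mul' _ (by positivity), ← sqrt_inv]
  congr 1
  field_simp

theorem g_h_tendsto (f : ℝ) (hf : 0 < f)
    (g : ℝ → ℝ → ℝ) (hg : ∀ c d, g c d = Real.sqrt c / Real.sqrt (d + f) * (d / (d + f)) ^ c)
    (h : ℝ → ℝ) (hh : ∀ d, h d = (1 / 2) * (Real.log (1 + f / d))⁻¹) :
    Filter.Tendsto (fun d => g (h d) d) Filter.atTop
      (nhds ((Real.sqrt (2 * Real.exp 1 * f))⁻¹)) := by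
  have hlim : Tendsto (fun d => (√(2 * exp 1 * ((d + f) * log (1 + f / d))))⁻¹) atTop
      (𝓝 (√(2 * exp 1 * f))⁻¹) :=
    (((tendsto_add_mul_log_one_add_div_atTop f).const_mul _).sqrt).inv₀ (by positivity)
  refine hlim.congr' ?_
  filter_upwards [eventually_gt_atTop 0] with d hd
  rw [hg, hh, sqrt_div_sqrt_mul_rpow_half_inv_log hd hf]
end

section
/- Combining the Gamma-ratio bound and the bound on g: for any c, d, τ > 0, ζ ∈ ℝ, a > 0 with log a ≠ ζ, one has (d^c · |ζ − log a| · e^{1/2}) / (d + (τ/(2τ+2))·(ζ − log a)²)^{c+1/2} · √(τ/(τ+1)) · Γ(c+1/2)/Γ(c) < 1. -/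
/-!
Log-convexity of `Γ` gives `Γ (c + 1/2) ≤ √c Γ c`. With `f = τ x² / (2τ + 2)`, where
`x = ζ - log a`, the remaining factor is `√c d^c √(2 e f) / (d + f)^(c + 1/2)`, and squaring
shows that it is `< 1` exactly when `2 c e d^(2c) f < (d + f)^(2c + 1)`. Weighted AM-GM, which
is sharp at `f = d / (2c)`, bounds the right side below by `(1 + 1/(2c))^(2c+1) 2c d^(2c) f`,
and `e < (1 + 1/m)^(m + 1)` for every `m > 0`.
-/

open Real

theorem Real.Gamma_add_half_le_sqrt_mul_Gamma {c : ℝ} (hc : 0 < c) :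
    Gamma (c + 1 / 2) ≤ √c * Gamma c := by
  have hΓ : 0 ≤ Gamma c := (Gamma_pos_of_pos hc).le
  calc Gamma (c + 1 / 2) = Gamma (1 / 2 * c + 1 / 2 * (c + 1)) := by ring_nf
    _ ≤ Gamma c ^ (1 / 2 : ℝ) * Gamma (c + 1) ^ (1 / 2 : ℝ) :=
      Gamma_mul_add_mul_le_rpow_Gamma_mul_rpow_Gamma hc (by linarith) one_half_pos
        one_half_pos (by norm_num)
    _ = √c * Gamma c := by
      rw [Gamma_add_one hc.ne', mul_rpow hc.le hΓ, ← sqrt_eq_rpow, ← sqrt_eq_rpow,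
        mul_left_comm, mul_self_sqrt hΓ]

theorem Real.exp_one_lt_one_add_inv_rpow {m : ℝ} (hm : 0 < m) :
    exp 1 < (1 + m⁻¹) ^ (m + 1) := by
  have hlog : 2 / (2 * m + 1) < log (1 + m⁻¹) := by
    convert lt_log_one_add_of_pos (inv_pos.mpr hm) using 1
    field_simp
    ring
  have hone : 1 < 2 / (2 * m + 1) * (m + 1) := by
    rw [div_mul_eq_mul_div, one_lt_div (by positivity)]
    linarith
  rw [rpow_def_of_pos (by positivity), exp_lt_exp]
  nlinarith

/-- Weighted AM-GM for the weights `m / (m + 1)` and `1 / (m + 1)`, applied to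
`(1 + m⁻¹) d` and `(m + 1) f`. -/
theorem Real.one_add_inv_rpow_mul_rpow_mul_le_add_rpow {m d f : ℝ} (hm : 0 < m) (hd : 0 ≤ d)
    (hf : 0 ≤ f) : (1 + m⁻¹) ^ (m + 1) * m * d ^ m * f ≤ (d + f) ^ (m + 1) := by
  have hr : 0 ≤ 1 + m⁻¹ := by positivity
  have hp₁ : 0 ≤ (1 + m⁻¹) * d := by positivity
  have hp₂ : 0 ≤ (m + 1) * f := by positivity
  have amgm : ((1 + m⁻¹) * d) ^ (m / (m + 1)) * ((m + 1) * f) ^ (1 / (m + 1)) ≤ d + f := by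
    convert geom_mean_le_arith_mean2_weighted (w₁ := m / (m + 1)) (w₂ := 1 / (m + 1))
      (by positivity) (by positivity) hp₁ hp₂ (by field_simp) using 1
    field_simp
  calc (1 + m⁻¹) ^ (m + 1) * m * d ^ m * f
      = ((1 + m⁻¹) * d) ^ m * ((m + 1) * f) := by
        rw [rpow_add_one (by positivity), mul_rpow hr hd]
        field_simp
    _ = (((1 + m⁻¹) * d) ^ (m / (m + 1)) * ((m + 1) * f) ^ (1 / (m + 1))) ^ (m + 1) := by
        have hm₁ : m + 1 ≠ 0 := by positivity
        rw [mul_rpow (rpow_nonneg hp₁ _) (rpow_nonneg hp₂ _), ← rpow_mul hp₁, ← rpow_mul hp₂,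
          div_mul_cancel₀ m hm₁, one_div_mul_cancel hm₁, rpow_one]
    _ ≤ (d + f) ^ (m + 1) := by gcongr

theorem Real.sqrt_mul_rpow_mul_sqrt_lt_add_rpow {c d f : ℝ} (hc : 0 < c)
    (hd : 0 < d) (hf : 0 < f) :
    √c * d ^ c * √(2 * exp 1 * f) < (d + f) ^ (c + 1 / 2) := by
  have hdf : 0 ≤ d + f := by positivity
  have key : exp 1 * (2 * c) * d ^ (2 * c) * f < (d + f) ^ (2 * c + 1) :=
    calc exp 1 * (2 * c) * d ^ (2 * c) * f
        < (1 + (2 * c)⁻¹) ^ (2 * c + 1) * (2 * c) * d ^ (2 * c) * f := by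
          gcongr
          exact exp_one_lt_one_add_inv_rpow (by positivity)
      _ ≤ (d + f) ^ (2 * c + 1) :=
          one_add_inv_rpow_mul_rpow_mul_le_add_rpow (by positivity) hd.le hf.le
  have lhs_sq : (√c * d ^ c * √(2 * exp 1 * f)) ^ 2 = exp 1 * (2 * c) * d ^ (2 * c) * f := by
    rw [mul_pow, mul_pow, sq_sqrt hc.le, sq_sqrt (by positivity), ← rpow_natCast,
      ← rpow_mul hd.le]
    push_cast
    ring_nf
  have rhs_sq : ((d + f) ^ (c + 1 / 2)) ^ 2 = (d + f) ^ (2 * c + 1) := by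
    rw [← rpow_natCast, ← rpow_mul hdf]
    push_cast
    ring_nf
  refine lt_of_pow_lt_pow_left₀ 2 (by positivity) ?_
  rwa [lhs_sq, rhs_sq]

theorem combined_bound_general (c d τ : ℝ) (hc : 0 < c) (hd : 0 < d) (hτ : 0 < τ)
    (ζ : ℝ) (a : ℝ) (hne : Real.log a ≠ ζ) :
    d ^ c * |ζ - Real.log a| * Real.exp (1 / 2) /
        (d + τ / (2 * τ + 2) * (ζ - Real.log a) ^ 2) ^ (c + 1 / 2) *
        Real.sqrt (τ / (τ + 1)) * (Real.Gamma (c + 1 / 2) / Real.Gamma c) < 1 := by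
  set x := ζ - log a
  set s := τ / (τ + 1)
  set f := s * x ^ 2 / 2
  have hs : 0 < s := by positivity
  have hx : x ≠ 0 := sub_ne_zero.mpr hne.symm
  have hf : 0 < f := by positivity
  have hcoef : τ / (2 * τ + 2) * x ^ 2 = f := by simp only [f, s]; field_simp
  have hroot : |x| * exp (1 / 2) * √s = √(2 * exp 1 * f) := by
    rw [← sqrt_sq (by positivity : 0 ≤ |x| * exp (1 / 2) * √s), mul_pow, mul_pow, sq_abs,
      sq_sqrt hs.le, ← exp_nat_mul]
    congr 1
    simp only [f]
    norm_num
    ring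
  have hΓ : Gamma (c + 1 / 2) / Gamma c ≤ √c :=
    (div_le_iff₀ (Gamma_pos_of_pos hc)).mpr (Gamma_add_half_le_sqrt_mul_Gamma hc)
  rw [hcoef]
  calc d ^ c * |x| * exp (1 / 2) / (d + f) ^ (c + 1 / 2) * √s * (Gamma (c + 1 / 2) / Gamma c)
      = d ^ c * √(2 * exp 1 * f) * (Gamma (c + 1 / 2) / Gamma c) / (d + f) ^ (c + 1 / 2) := by
        rw [← hroot]; ring
    _ ≤ d ^ c * √(2 * exp 1 * f) * √c / (d + f) ^ (c + 1 / 2) := by gcongr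
    _ < 1 := by
        rw [div_lt_one (by positivity)]
        linarith [sqrt_mul_rpow_mul_sqrt_lt_add_rpow hc hd hf]

theorem combined_bound (c d τ : ℝ) (hc : 0 < c) (hd : 0 < d) (hτ : 0 < τ)
    (ζ : ℝ) (a : ℝ) (ha : 0 < a) (hne : Real.log a ≠ ζ) :
    d ^ c * |ζ - Real.log a| * Real.exp (1 / 2) /
        (d + τ / (2 * τ + 2) * (ζ - Real.log a) ^ 2) ^ (c + 1 / 2) *
        Real.sqrt (τ / (τ + 1)) * (Real.Gamma (c + 1 / 2) / Real.Gamma c) < 1 :=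
  combined_bound_general c d τ hc hd hτ ζ a hne
end

section
/- For a degenerate data sample of type 3 (there exists a ∈ 𝒜 separating failures from non-failures: a_i < a < a_j iff z_i ≠ z_j, with all non-failure IMs below a and all failure IMs above a), the likelihood ℓ(z^k|a^k, θ) tends to 1 as β → 0⁺ for any fixed α with max{a_i : z_i = 0} < α < min{a_j : z_j = 1}. -/
/-!
`Phi` is the cumulative distribution function of the standard Gaussian measure, so it tends
to `0` at `-∞` and to `1` at `+∞`. As `β → 0⁺` the argument `(log a_i - log α) / β` tends to
`-∞` when `z_i = 0` and to `+∞` when `z_i = 1`, so every factor of the likelihood tends to `1`.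
-/

open MeasureTheory

/-- The standard normal cumulative distribution function. -/
noncomputable def Phi (x : ℝ) : ℝ :=
  (Real.sqrt (2 * Real.pi))⁻¹ * ∫ t in Set.Iic x, Real.exp (-t ^ 2 / 2)

open Filter Topology ProbabilityTheory

theorem Phi_eq_cdf_gaussianReal : Phi = cdf (gaussianReal 0 1) := by
  ext x
  rw [cdf_eq_real, measureReal_def, gaussianReal_apply_eq_integral _ one_ne_zero,
    ENNReal.toReal_ofReal
      (setIntegral_nonneg measurableSet_Iic fun t _ ↦ gaussianPDFReal_nonneg _ _ t),
    Phi, ← integral_const_mul]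
  simp [gaussianPDFReal]

theorem tendsto_const_div_nhdsGT_zero_atTop {c : ℝ} (hc : 0 < c) :
    Tendsto (fun β : ℝ ↦ c / β) (𝓝[>] 0) atTop := by
  simpa only [div_eq_mul_inv] using tendsto_inv_nhdsGT_zero.const_mul_atTop hc

theorem tendsto_const_div_nhdsGT_zero_atBot {c : ℝ} (hc : c < 0) :
    Tendsto (fun β : ℝ ↦ c / β) (𝓝[>] 0) atBot := by
  simpa only [div_eq_mul_inv] using tendsto_inv_nhdsGT_zero.const_mul_atTop_of_neg hc

theorem tendsto_cdf_pow_mul_one_sub_cdf_pow (μ : Measure ℝ) [IsProbabilityMeasure μ]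
    {z : ℕ} {c : ℝ} (hz : z ≤ 1) (hc₀ : z = 0 → c < 0) (hc₁ : z = 1 → 0 < c) :
    Tendsto (fun β ↦ cdf μ (c / β) ^ z * (1 - cdf μ (c / β)) ^ (1 - z)) (𝓝[>] 0) (𝓝 1) := by
  obtain rfl | rfl := Nat.le_one_iff_eq_zero_or_eq_one.mp hz
  · have h := (tendsto_cdf_atBot μ).comp (tendsto_const_div_nhdsGT_zero_atBot (hc₀ rfl))
    simpa using (tendsto_const_nhds (x := (1 : ℝ))).sub h
  · simpa [Function.comp_def] using
      (tendsto_cdf_atTop μ).comp (tendsto_const_div_nhdsGT_zero_atTop (hc₁ rfl))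

theorem type3_degenerate_likelihood_tendsto_one
    (k : ℕ) (a : Fin k → ℝ) (ha : ∀ i, 0 < a i) (z : Fin k → ℕ) (hz : ∀ i, z i ≤ 1)
    (α : ℝ) (hα : 0 < α)
    (hsep0 : ∀ i, z i = 0 → a i < α) (hsep1 : ∀ i, z i = 1 → α < a i) :
    Filter.Tendsto
      (fun β : ℝ =>
        ∏ i : Fin k, Phi ((Real.log (a i) - Real.log α) / β) ^ (z i) *
          (1 - Phi ((Real.log (a i) - Real.log α) / β)) ^ (1 - z i))
      (nhdsWithin 0 (Set.Ioi 0)) (nhds 1) := by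
  have hfactor (i : Fin k) :=
    tendsto_cdf_pow_mul_one_sub_cdf_pow (gaussianReal 0 1) (c := Real.log (a i) - Real.log α)
      (hz i)
      (fun h ↦ sub_neg.mpr (Real.log_lt_log (ha i) (hsep0 i h)))
      (fun h ↦ sub_pos.mpr (Real.log_lt_log hα (hsep1 i h)))
  rw [Phi_eq_cdf_gaussianReal]
  simpa only [Finset.prod_const_one] using tendsto_finsetProd Finset.univ fun i _ ↦ hfactor i
end
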